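/- Fact IV (Robust Forward Completeness from the input). Suppose system (1.2) satisfies hypothesis (A1). Then there exist functions μ ∈ K⁺ and a ∈ K∞ and a constant R ≥ 0 such that for every t₀ ∈ ℕ, x₀ ∈ X, d : ℕ → D, u : ℕ → U, the corresponding solution x(·) of (1.2) with x(t₀) = x₀ satisfies ‖x(t)‖_X ≤ μ(t) · a(R + ‖x₀‖_X + sup_{t₀ ≤ τ ≤ t} ‖u(τ)‖_U) for all t ≥ t₀. -/

import Mathlib

open Filter Topology Bornology Set

noncomputable section

/-- Class `K∞`: continuous, strictly increasing on `[0,∞)`, zero at zero, unbounded. -/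
def IsKInf (a : ℝ → ℝ) : Prop :=
  ContinuousOn a (Set.Ici 0) ∧ StrictMonoOn a (Set.Ici 0) ∧ a 0 = 0 ∧
    Filter.Tendsto a Filter.atTop Filter.atTop

/-- Class `K⁺`: continuous and positive on `[0,∞)`. -/
def IsKPlus (b : ℝ → ℝ) : Prop :=
  ContinuousOn b (Set.Ici 0) ∧ ∀ t : ℝ, 0 ≤ t → 0 < b t

/-- Class `KL`. -/
def IsKL (σ : ℝ → ℝ → ℝ) : Prop :=
  ContinuousOn (fun p : ℝ × ℝ => σ p.1 p.2) (Set.Ici 0 ×ˢ Set.Ici 0) ∧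
  (∀ t : ℝ, 0 ≤ t → StrictMonoOn (fun s => σ s t) (Set.Ici 0) ∧ σ 0 t = 0) ∧
  (∀ s : ℝ, 0 ≤ s → AntitoneOn (fun t => σ s t) (Set.Ici 0) ∧
    Filter.Tendsto (fun t => σ s t) Filter.atTop (nhds 0))

/-!
Iterating (A1) from `‖x t₀‖ ≤ c`, with all inputs bounded by `c`, gives `‖x t‖ ≤ G t c` for
`G 0 c = c`, `G (t + 1) c = G t c + a (β t * G t c) + a (β t * c)`; the summand `G t c` makes
`G` increasing in `t`, so the bound does not depend on the initial time `t₀`. Every `G t` is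
continuous, increasing and vanishes at `0`, and the locally finite sum
`κ s = s + ∑ₜ ramp t s * G t s`, whose weight `ramp t` rises from `0` at `t - 1` to `1` at `t`,
is of class `K∞` with `G t s ≤ κ s` for `s ≥ t`. Hence
`G t c ≤ κ (max t c) ≤ (κ (t + 1) / κ 1) * κ (1 + c)`, i.e. the claim with `μ t = κ (t + 1) / κ 1`
and `R = 1`.
-/

def ramp (t : ℕ) (s : ℝ) : ℝ := max 0 (min (s + 1 - t) 1)

lemma ramp_nonneg (t : ℕ) (s : ℝ) : 0 ≤ ramp t s := le_max_left _ _

lemma monotone_ramp (t : ℕ) : Monotone (ramp t) := fun _ _ h =>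
  max_le_max le_rfl (min_le_min (by linarith) le_rfl)

lemma continuous_ramp (t : ℕ) : Continuous (ramp t) := by
  unfold ramp; fun_prop

lemma ramp_eq_zero_of_le {t : ℕ} {s : ℝ} (h : s + 1 ≤ t) : ramp t s = 0 :=
  max_eq_left (min_le_of_left_le (by linarith))

lemma ramp_eq_one_of_le {t : ℕ} {s : ℝ} (h : (t : ℝ) ≤ s) : ramp t s = 1 := by
  rw [ramp, min_eq_right (by linarith), max_eq_right zero_le_one]

lemma lt_of_ramp_ne_zero {t : ℕ} {s : ℝ} (h : ramp t s ≠ 0) : (t : ℝ) < s + 1 := by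
  by_contra! h'
  exact h (ramp_eq_zero_of_le h')

def kInfEnvelope (g : ℕ → ℝ → ℝ) (s : ℝ) : ℝ := max s 0 + ∑ᶠ t, ramp t s * g t s

section kInfEnvelope

variable {g : ℕ → ℝ → ℝ}

lemma support_ramp_mul_subset (g : ℕ → ℝ → ℝ) {s r : ℝ} (h : s ≤ r) :
    Function.support (fun t => ramp t s * g t s) ⊆ Finset.range (⌈r⌉₊ + 1) := by
  intro t ht
  have hts := lt_of_ramp_ne_zero (left_ne_zero_of_mul ht)
  have : (t : ℝ) < ⌈r⌉₊ + 1 := by linarith [Nat.le_ceil r]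
  simpa using (by exact_mod_cast this : t < ⌈r⌉₊ + 1)

lemma finsum_ramp_mul_eq_sum (g : ℕ → ℝ → ℝ) {s r : ℝ} (h : s ≤ r) :
    ∑ᶠ t, ramp t s * g t s = ∑ t ∈ Finset.range (⌈r⌉₊ + 1), ramp t s * g t s :=
  finsum_eq_sum_of_support_subset _ (support_ramp_mul_subset g h)

variable (hcont : ∀ t, Continuous (g t)) (hmono : ∀ t, Monotone (g t))
  (hnonneg : ∀ t s, 0 ≤ g t s) (hzero : ∀ t, g t 0 = 0)

include hnonneg in
lemma finsum_ramp_mul_nonneg (s : ℝ) : 0 ≤ ∑ᶠ t, ramp t s * g t s :=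
  finsum_nonneg fun t => mul_nonneg (ramp_nonneg t s) (hnonneg t s)

include hmono hnonneg in
lemma monotone_finsum_ramp_mul : Monotone fun s => ∑ᶠ t, ramp t s * g t s := by
  intro s r h
  simp only [finsum_ramp_mul_eq_sum g h, finsum_ramp_mul_eq_sum g le_rfl]
  exact Finset.sum_le_sum fun t _ =>
    mul_le_mul (monotone_ramp t h) (hmono t h) (hnonneg t s) (ramp_nonneg t r)

include hcont in
lemma continuous_finsum_ramp_mul : Continuous fun s => ∑ᶠ t, ramp t s * g t s := by
  refine continuous_finsum (fun t => (continuous_ramp t).mul (hcont t)) fun x => ?_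
  refine ⟨Iio (x + 1), Iio_mem_nhds (lt_add_one x),
    (Finset.range (⌈x + 1⌉₊ + 1)).finite_toSet.subset ?_⟩
  rintro t ⟨s, hs, hsx⟩
  exact support_ramp_mul_subset g (le_of_lt (mem_Iio.1 hsx)) hs

include hnonneg in
lemma le_kInfEnvelope {t : ℕ} {s : ℝ} (h : (t : ℝ) ≤ s) : g t s ≤ kInfEnvelope g s := by
  have hsingle : g t s ≤ ∑ᶠ t', ramp t' s * g t' s := by
    rw [finsum_ramp_mul_eq_sum g le_rfl, ← one_mul (g t s), ← ramp_eq_one_of_le h]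
    refine Finset.single_le_sum (fun t' _ => mul_nonneg (ramp_nonneg t' s) (hnonneg t' s)) ?_
    exact Finset.mem_range.2 (Nat.lt_succ_of_le (Nat.cast_le.1 (h.trans (Nat.le_ceil s))))
  exact hsingle.trans (le_add_of_nonneg_left (le_max_right s 0))

include hcont hmono hnonneg hzero in
theorem isKInf_kInfEnvelope : IsKInf (kInfEnvelope g) := by
  refine ⟨?_, ?_, ?_, ?_⟩
  · exact ((continuous_id.max continuous_const).add
      (continuous_finsum_ramp_mul hcont)).continuousOn
  · intro s hs r hr h
    have : max s 0 < max r 0 := by rwa [max_eq_left hs, max_eq_left hr]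
    exact add_lt_add_of_lt_of_le this (monotone_finsum_ramp_mul hmono hnonneg h.le)
  · simp [kInfEnvelope, hzero]
  · exact tendsto_atTop_mono (fun s => (le_max_left s 0).trans
      (le_add_of_nonneg_right (finsum_ramp_mul_nonneg hnonneg s))) tendsto_id

end kInfEnvelope

lemma IsKPlus.nonneg_nat {β : ℝ → ℝ} (hβ : IsKPlus β) (t : ℕ) : 0 ≤ β t :=
  (hβ.2 t t.cast_nonneg).le

namespace IsKInf

variable {a : ℝ → ℝ} (ha : IsKInf a)
include ha

lemma mono {s r : ℝ} (hs : 0 ≤ s) (h : s ≤ r) : a s ≤ a r :=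
  ha.2.1.monotoneOn hs (hs.trans h) h

lemma apply_mul_le_apply_mul {b s r : ℝ} (hb : 0 ≤ b) (hs : 0 ≤ s) (h : s ≤ r) :
    a (b * s) ≤ a (b * r) :=
  ha.mono (mul_nonneg hb hs) (mul_le_mul_of_nonneg_left h hb)

lemma nonneg {s : ℝ} (hs : 0 ≤ s) : 0 ≤ a s := by
  simpa [ha.2.2.1] using ha.mono le_rfl hs

lemma pos {s : ℝ} (hs : 0 < s) : 0 < a s := by
  simpa [ha.2.2.1] using ha.2.1 self_mem_Ici hs.le hs

lemma le_div_mul_of_max {t c : ℝ} (ht : 0 ≤ t) (hc : 0 ≤ c) :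
    a (max t c) ≤ a (t + 1) / a 1 * a (1 + c) := by
  have ha1 : 0 < a 1 := ha.pos one_pos
  rcases le_total t c with htc | hct
  · have hμ : 1 ≤ a (t + 1) / a 1 := (one_le_div ha1).2 (ha.mono zero_le_one (by linarith))
    calc a (max t c) = a c := by rw [max_eq_right htc]
      _ ≤ a (1 + c) := ha.mono hc (by linarith)
      _ ≤ a (t + 1) / a 1 * a (1 + c) :=
        le_mul_of_one_le_left (ha.nonneg (by linarith)) hμ
  · calc a (max t c) = a t := by rw [max_eq_left hct]
      _ ≤ a (t + 1) := ha.mono ht (by linarith)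
      _ = a (t + 1) / a 1 * a 1 := (div_mul_cancel₀ _ ha1.ne').symm
      _ ≤ a (t + 1) / a 1 * a (1 + c) :=
        mul_le_mul_of_nonneg_left (ha.mono zero_le_one (by linarith))
          (div_nonneg (ha.nonneg (by linarith)) ha1.le)

lemma isKPlus_shift_div : IsKPlus fun s => a (s + 1) / a 1 := by
  refine ⟨?_, fun s hs => div_pos (ha.pos (by linarith)) (ha.pos one_pos)⟩
  exact (ha.1.comp (continuous_add_const 1).continuousOn
    fun s (hs : 0 ≤ s) => (by linarith : (0 : ℝ) ≤ s + 1)).div_const _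

end IsKInf

def stateBound (a β : ℝ → ℝ) : ℕ → ℝ → ℝ
  | 0, c => max c 0
  | t + 1, c => stateBound a β t c + a (β t * stateBound a β t c) + a (β t * max c 0)

section stateBound

variable {a β : ℝ → ℝ} (ha : IsKInf a)
include ha

lemma stateBound_apply_zero (t : ℕ) : stateBound a β t 0 = 0 := by
  induction t with
  | zero => simp [stateBound]
  | succ t ih => simp [stateBound, ih, ha.2.2.1]

variable (hβ : IsKPlus β)
include hβ

lemma max_le_stateBound (t : ℕ) (c : ℝ) : max c 0 ≤ stateBound a β t c := by
  induction t with
  | zero => exact le_rfl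
  | succ t ih =>
    have hβt : 0 ≤ β t := hβ.nonneg_nat t
    have h₁ := ha.nonneg (mul_nonneg hβt ((le_max_right c 0).trans ih))
    have h₂ := ha.nonneg (mul_nonneg hβt (le_max_right c 0))
    simp only [stateBound]
    linarith

lemma stateBound_nonneg (t : ℕ) (c : ℝ) : 0 ≤ stateBound a β t c :=
  (le_max_right c 0).trans (max_le_stateBound ha hβ t c)

lemma monotone_stateBound (t : ℕ) : Monotone (stateBound a β t) := by
  induction t with
  | zero => exact fun _ _ h => max_le_max h le_rfl
  | succ t ih =>
    intro c c' h
    have hβt : 0 ≤ β t := hβ.nonneg_nat t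
    have hmax : max c 0 ≤ max c' 0 := max_le_max h le_rfl
    exact add_le_add
      (add_le_add (ih h) (ha.apply_mul_le_apply_mul hβt (stateBound_nonneg ha hβ t c) (ih h)))
      (ha.apply_mul_le_apply_mul hβt (le_max_right c 0) hmax)

lemma continuous_stateBound (t : ℕ) : Continuous (stateBound a β t) := by
  induction t with
  | zero => exact continuous_id.max continuous_const
  | succ t ih =>
    have hβt : 0 ≤ β t := hβ.nonneg_nat t
    have hmax : Continuous fun c : ℝ => max c 0 := continuous_id.max continuous_const
    exact (ih.add (ha.1.comp_continuous (continuous_const.mul ih)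
      fun c => mul_nonneg hβt (stateBound_nonneg ha hβ t c))).add
      (ha.1.comp_continuous (continuous_const.mul hmax)
        fun c => mul_nonneg hβt (le_max_right c 0))

theorem le_stateBound_of_step {ξ υ : ℕ → ℝ} {t₀ : ℕ} {c : ℝ} (hξ : ∀ t, 0 ≤ ξ t)
    (hυ : ∀ t, 0 ≤ υ t) (h₀ : ξ t₀ ≤ c)
    (hstep : ∀ t, t₀ ≤ t → ξ (t + 1) ≤ a (β t * ξ t) + a (β t * υ t)) :
    ∀ t, t₀ ≤ t → (∀ τ ∈ Ico t₀ t, υ τ ≤ c) → ξ t ≤ stateBound a β t c := by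
  intro t ht
  induction t, ht using Nat.le_induction with
  | base => exact fun _ => h₀.trans ((le_max_left c 0).trans (max_le_stateBound ha hβ t₀ c))
  | succ t ht ih =>
    intro hυc
    have hξt := ih fun τ hτ => hυc τ ⟨hτ.1, hτ.2.trans (Nat.lt_succ_self t)⟩
    have hυt : υ t ≤ max c 0 := (hυc t ⟨ht, Nat.lt_succ_self t⟩).trans (le_max_left c 0)
    have hβt : 0 ≤ β t := hβ.nonneg_nat t
    calc ξ (t + 1) ≤ a (β t * ξ t) + a (β t * υ t) := hstep t ht
      _ ≤ a (β t * stateBound a β t c) + a (β t * max c 0) :=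
        add_le_add (ha.apply_mul_le_apply_mul hβt (hξ t) hξt)
          (ha.apply_mul_le_apply_mul hβt (hυ t) hυt)
      _ ≤ stateBound a β (t + 1) c := by
        simp only [stateBound]
        linarith [stateBound_nonneg ha hβ t c]

end stateBound

lemma le_biSup_of_finite {ι : Type*} {f : ι → ℝ} {s : Set ι} (hs : s.Finite) {i : ι}
    (hi : i ∈ s) : f i ≤ ⨆ j ∈ s, f j :=
  le_ciSup₂ (f := fun j (_ : j ∈ s) => f j) ((hs.image f).bddAbove.mono (by
    simp only [iUnion_subset_iff]; rintro j _ ⟨hj, rfl⟩; exact ⟨j, hj, rfl⟩)) i hi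

theorem fact_IV_general {X U D : Type*}
    [NormedAddCommGroup X] [NormedAddCommGroup U]
    (f : ℕ → D → X → U → X)
    (hA1 : ∃ a β : ℝ → ℝ, IsKInf a ∧ IsKPlus β ∧
      ∀ (t : ℕ) (d : D) (x : X) (u : U),
        ‖f t d x u‖ ≤ a (β t * ‖x‖) + a (β t * ‖u‖)) :
    ∃ (μ a : ℝ → ℝ) (R : ℝ), IsKPlus μ ∧ IsKInf a ∧ 0 ≤ R ∧
      ∀ (d : ℕ → D) (u : ℕ → U) (t₀ : ℕ) (x₀ : X) (x : ℕ → X),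
        x t₀ = x₀ → (∀ t, t₀ ≤ t → x (t + 1) = f t (d t) (x t) (u t)) →
        ∀ t, t₀ ≤ t →
          ‖x t‖ ≤ μ t * a (R + ‖x₀‖ + ⨆ τ ∈ Set.Icc t₀ t, ‖u τ‖) := by
  obtain ⟨a, β, ha, hβ, hf⟩ := hA1
  set κ := kInfEnvelope (stateBound a β)
  have hκ : IsKInf κ := isKInf_kInfEnvelope (continuous_stateBound ha hβ)
    (monotone_stateBound ha hβ) (stateBound_nonneg ha hβ) (stateBound_apply_zero ha)
  refine ⟨fun s => κ (s + 1) / κ 1, κ, 1, hκ.isKPlus_shift_div, hκ, zero_le_one, ?_⟩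
  rintro d u t₀ _ x rfl hx t ht
  set S := ⨆ τ ∈ Icc t₀ t, ‖u τ‖
  have hS : 0 ≤ S := Real.iSup_nonneg fun τ => Real.iSup_nonneg fun _ => norm_nonneg (u τ)
  have hc : 0 ≤ ‖x t₀‖ + S := add_nonneg (norm_nonneg _) hS
  have hxt : ‖x t‖ ≤ stateBound a β t (‖x t₀‖ + S) :=
    le_stateBound_of_step (υ := fun τ => ‖u τ‖) ha hβ (fun _ => norm_nonneg _)
      (fun _ => norm_nonneg _) (le_add_of_nonneg_right hS)
      (fun τ hτ => hx τ hτ ▸ hf τ (d τ) (x τ) (u τ)) t ht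
      fun τ hτ => (le_biSup_of_finite (f := fun τ => ‖u τ‖) (finite_Icc t₀ t)
        (Ico_subset_Icc_self hτ)).trans (le_add_of_nonneg_left (norm_nonneg _))
  calc ‖x t‖ ≤ stateBound a β t (max t (‖x t₀‖ + S)) :=
        hxt.trans (monotone_stateBound ha hβ t (le_max_right _ _))
    _ ≤ κ (max t (‖x t₀‖ + S)) :=
        le_kInfEnvelope (stateBound_nonneg ha hβ) (le_max_left _ _)
    _ ≤ κ (t + 1) / κ 1 * κ (1 + (‖x t₀‖ + S)) := hκ.le_div_mul_of_max t.cast_nonneg hc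
    _ = κ (t + 1) / κ 1 * κ (1 + ‖x t₀‖ + S) := by rw [add_assoc]

/-- Fact IV: robust forward completeness from the input, for system (1.2) under (A1). -/
theorem fact_IV {X U D : Type*}
    [NormedAddCommGroup X] [NormedSpace ℝ X] [NormedAddCommGroup U] [NormedSpace ℝ U]
    [Nonempty D]
    (f : ℕ → D → X → U → X)
    (hf0 : ∀ (t : ℕ) (d : D), f t d 0 0 = 0)
    (hA1 : ∃ a β : ℝ → ℝ, IsKInf a ∧ IsKPlus β ∧
      ∀ (t : ℕ) (d : D) (x : X) (u : U),
        ‖f t d x u‖ ≤ a (β t * ‖x‖) + a (β t * ‖u‖)) :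
    ∃ (μ a : ℝ → ℝ) (R : ℝ), IsKPlus μ ∧ IsKInf a ∧ 0 ≤ R ∧
      ∀ (d : ℕ → D) (u : ℕ → U) (t₀ : ℕ) (x₀ : X) (x : ℕ → X),
        x t₀ = x₀ → (∀ t, t₀ ≤ t → x (t + 1) = f t (d t) (x t) (u t)) →
        ∀ t, t₀ ≤ t →
          ‖x t‖ ≤ μ t * a (R + ‖x₀‖ + ⨆ τ ∈ Set.Icc t₀ t, ‖u τ‖) :=
  fact_IV_general f hA1
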